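/- For n ≥ 0 and k ≥ 2, a binary word of length n has exactly k−1 descents after run-sorting if and only if it contains exactly k occurrences of the factor '01'; and the number of binary words of length n containing exactly k occurrences of '01' (k ≥ 2) is C(n, 2k) + C(n, 2k+1). -/

import Mathlib

/-- Lexicographic (≤) comparison of lists of naturals, as a `Bool`. -/
def lexLe : List ℕ → List ℕ → Bool
  | [], _ => true
  | _ :: _, [] => false
  | a :: as, b :: bs => decide (a < b) || (a == b && lexLe as bs)

/-- Split a word into its maximal (weakly) increasing runs. -/
def splitRuns : List ℕ → List (List ℕ)
  | [] => []
  | [x] => [[x]]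
  | x :: y :: rest =>
    match splitRuns (y :: rest) with
    | [] => [[x]]
    | r :: rs => if x ≤ y then (x :: r) :: rs else [x] :: r :: rs

/-- Rearrange the maximal increasing runs of a word in lexicographic order. -/
def runsort (w : List ℕ) : List ℕ := ((splitRuns w).mergeSort lexLe).flatten

/-- A word is run-sorted if its runs already appear in lexicographic order. -/
def IsRunSorted (w : List ℕ) : Prop := runsort w = w

instance : DecidablePred IsRunSorted := fun w => inferInstanceAs (Decidable (runsort w = w))

/-- The number of descents of a word: positions k (0-indexed) with w(k) > w(k+1). -/
def des (w : List ℕ) : ℕ := ((w.zip w.tail).filter fun p => decide (p.2 < p.1)).length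

/-- The one-line notation word (with values 1,…,n) of a permutation of `Fin n`. -/
def permWord {n : ℕ} (σ : Equiv.Perm (Fin n)) : List ℕ := List.ofFn fun i => (σ i : ℕ) + 1

/-- The word (list of 0s and 1s) corresponding to a binary word on `Fin n`. -/
def word {n : ℕ} (w : Fin n → Fin 2) : List ℕ := List.ofFn fun i => (w i : ℕ)

/-- The number of occurrences of the factor `01` in a word. -/
def occ01 (w : List ℕ) : ℕ := ((w.zip w.tail).filter fun p => p.1 == 0 && p.2 == 1).length

/-!
Every maximal run of a binary word has the form `0^a 1^b`. Consecutive runs meet in a descent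
`1 0`, so every factor `01` lies inside a run, and the runs containing one are the mixed runs
(`a, b > 0`), one factor each. In lexicographic order the runs `0^a` come first, then the mixed
runs, then the runs `1^b`; so after run-sorting a descent occurs exactly between two consecutive
mixed runs, and `m` mixed runs give `m - 1` descents.

For the count, put a letter `x` in front of the words of length `n`. Splitting off the first
letter of the word gives Pascal's rule, so exactly `C(n + 1, 2k + x)` words `w` have `k` factors
`01` in `x w`; for `x = 1` this is `C(n + 1, 2k + 1) = C(n, 2k) + C(n, 2k + 1)`.
-/

open Finset

lemma lexLe_trans : ∀ a b c : List ℕ, lexLe a b → lexLe b c → lexLe a c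
  | [], _, _, _, _ => rfl
  | _ :: _, [], _, h, _ => by simp [lexLe] at h
  | _ :: _, _ :: _, [], _, h => by simp [lexLe] at h
  | a :: as, b :: bs, c :: cs, h1, h2 => by
      simp only [lexLe, Bool.or_eq_true, Bool.and_eq_true, decide_eq_true_eq,
        beq_iff_eq] at h1 h2 ⊢
      rcases h1 with h1 | ⟨rfl, h1⟩ <;> rcases h2 with h2 | ⟨rfl, h2⟩
      · exact Or.inl (h1.trans h2)
      · exact Or.inl h1
      · exact Or.inl h2
      · exact Or.inr ⟨rfl, lexLe_trans _ _ _ h1 h2⟩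

lemma lexLe_total : ∀ a b : List ℕ, (lexLe a b || lexLe b a) = true
  | [], _ => by simp [lexLe]
  | _ :: _, [] => by simp [lexLe]
  | a :: as, b :: bs => by
      have ih := lexLe_total as bs
      simp only [lexLe, Bool.or_eq_true, Bool.and_eq_true, decide_eq_true_eq,
        beq_iff_eq] at ih ⊢
      rcases Nat.lt_trichotomy a b with h | rfl | h
      · exact Or.inl (Or.inl h)
      · rcases ih with h | h
        · exact Or.inl (Or.inr ⟨rfl, h⟩)
        · exact Or.inr (Or.inr ⟨rfl, h⟩)
      · exact Or.inr (Or.inl h)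

lemma occ01_cons_cons (x y : ℕ) (l : List ℕ) :
    occ01 (x :: y :: l) = (if x = 0 ∧ y = 1 then 1 else 0) + occ01 (y :: l) := by
  by_cases h : x = 0 ∧ y = 1
  · obtain ⟨rfl, rfl⟩ := h
    simp [occ01, Nat.add_comm]
  · have h' : (x == 0 && y == 1) = false := by simpa using h
    simp [occ01, h', h]

lemma occ01_cons (x : ℕ) (l : List ℕ) :
    occ01 (x :: l) = (if x = 0 ∧ l.head? = some 1 then 1 else 0) + occ01 l := by
  cases l with
  | nil => simp [occ01]
  | cons y l => simp [occ01_cons_cons]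

lemma des_cons_cons (x y : ℕ) (l : List ℕ) :
    des (x :: y :: l) = (if y < x then 1 else 0) + des (y :: l) := by
  by_cases h : y < x <;> simp [des, h, Nat.add_comm]

lemma des_zero_cons (l : List ℕ) : des (0 :: l) = des l := by
  cases l with
  | nil => rfl
  | cons y l => simp [des_cons_cons]

lemma des_one_cons (l : List ℕ) :
    des (1 :: l) = (if l.head? = some 0 then 1 else 0) + des l := by
  cases l with
  | nil => rfl
  | cons y l => simp [des_cons_cons]

lemma exists_splitRuns_cons (c : ℕ) :
    ∀ t : List ℕ, ∃ r rs, splitRuns (c :: t) = (c :: r) :: rs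
  | [] => ⟨[], [], rfl⟩
  | y :: t => by
      obtain ⟨r, rs, h⟩ := exists_splitRuns_cons y t
      by_cases hcy : c ≤ y
      · exact ⟨y :: r, rs, by simp [splitRuns, h, hcy]⟩
      · exact ⟨[], (y :: r) :: rs, by simp [splitRuns, h, hcy]⟩

lemma occ01_eq_sum_splitRuns : ∀ l : List ℕ, occ01 l = ((splitRuns l).map occ01).sum
  | [] => rfl
  | [_] => rfl
  | x :: y :: t => by
      obtain ⟨r, rs, h⟩ := exists_splitRuns_cons y t
      have ih := occ01_eq_sum_splitRuns (y :: t)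
      rw [h] at ih
      by_cases hxy : x ≤ y
      · simp [splitRuns, h, hxy, occ01_cons_cons x y, ih, Nat.add_assoc]
      · have : ¬(x = 0 ∧ y = 1) := by omega
        rw [show splitRuns (x :: y :: t) = [x] :: (y :: r) :: rs by simp [splitRuns, h, hxy],
          occ01_cons_cons, if_neg this, ih]
        simp [occ01]

def binRun (a b : ℕ) : List ℕ := List.replicate a 0 ++ List.replicate b 1

def IsBinRun (r : List ℕ) : Prop := ∃ a b, 0 < a + b ∧ r = binRun a b

lemma head?_binRun_append {a b : ℕ} (hab : 0 < a + b) (l : List ℕ) :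
    (binRun a b ++ l).head? = some (if 0 < a then 0 else 1) := by
  rcases a with _ | a
  · rcases b with _ | b
    · omega
    · simp [binRun, List.replicate_succ]
  · simp [binRun, List.replicate_succ]

lemma isBinRun_of_mem_splitRuns :
    ∀ l : List ℕ, (∀ x ∈ l, x ≤ 1) → ∀ r ∈ splitRuns l, IsBinRun r
  | [], _, _, hr => by simp [splitRuns] at hr
  | [x], hl, r, hr => by
      obtain rfl : r = [x] := by simpa [splitRuns] using hr
      rcases Nat.le_one_iff_eq_zero_or_eq_one.mp (hl x (by simp)) with rfl | rfl
      exacts [⟨1, 0, by simp, rfl⟩, ⟨0, 1, by simp, rfl⟩]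
  | x :: y :: t, hl, r, hr => by
      have ih := isBinRun_of_mem_splitRuns (y :: t) fun z hz => hl z (.tail _ hz)
      obtain ⟨s, rs, h⟩ := exists_splitRuns_cons y t
      rw [h] at ih
      have hx : x ≤ 1 := hl x (by simp)
      by_cases hxy : x ≤ y
      · simp only [splitRuns, h, if_pos hxy, List.mem_cons] at hr
        rcases hr with rfl | hr
        · obtain ⟨a, b, hab, hys⟩ := ih (y :: s) (by simp)
          rcases Nat.le_one_iff_eq_zero_or_eq_one.mp hx with rfl | rfl
          · exact ⟨a + 1, b, by omega, by simp [binRun, hys, List.replicate_succ]⟩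
          · have hy : y = 1 := le_antisymm (hl y (by simp)) hxy
            have ha : a = 0 := by
              by_contra ha
              simpa [hy, ha, ← hys] using head?_binRun_append hab []
            subst ha
            exact ⟨0, b + 1, by omega, by simp [binRun, hys, List.replicate_succ]⟩
        · exact ih r (.tail _ hr)
      · simp only [splitRuns, h, if_neg hxy, List.mem_cons] at hr
        rcases hr with rfl | hr
        · exact ⟨0, 1, by simp, by simp [binRun]; omega⟩
        · exact ih r (by simpa using hr)

lemma occ01_binRun (a b : ℕ) : occ01 (binRun a b) = if 0 < a ∧ 0 < b then 1 else 0 := by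
  induction a with
  | zero =>
    induction b with
    | zero => rfl
    | succ b ih => simpa [binRun, List.replicate_succ, occ01_cons] using ih
  | succ a ih =>
    rw [binRun, List.replicate_succ, List.cons_append, ← binRun, occ01_cons, ih]
    rcases b with _ | b
    · simp [binRun, List.head?_replicate]
    · have h := head?_binRun_append (a := a) (b := b + 1) (by omega) []
      rw [List.append_nil] at h
      rw [h]
      rcases a with _ | a <;> simp

lemma des_replicate_zero_append (a : ℕ) (l : List ℕ) :
    des (List.replicate a 0 ++ l) = des l := by
  induction a with
  | zero => rfl
  | succ a ih => rw [List.replicate_succ, List.cons_append, des_zero_cons, ih]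

lemma des_replicate_one_append (b : ℕ) (l : List ℕ) :
    des (List.replicate (b + 1) 1 ++ l) = (if l.head? = some 0 then 1 else 0) + des l := by
  induction b with
  | zero => exact des_one_cons l
  | succ b ih =>
    rw [List.replicate_succ, List.cons_append, des_one_cons, ih]
    simp [List.replicate_succ]

lemma des_binRun_append (a b : ℕ) (l : List ℕ) :
    des (binRun a b ++ l) = (if 0 < b ∧ l.head? = some 0 then 1 else 0) + des l := by
  rw [binRun, List.append_assoc, des_replicate_zero_append]
  rcases b with _ | b
  · simp
  · simp [des_replicate_one_append]

lemma eq_zero_of_lexLe_binRun_zero {b c d : ℕ} (hb : 0 < b)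
    (h : lexLe (binRun 0 b) (binRun c d)) : c = 0 := by
  obtain ⟨b, rfl⟩ := Nat.exists_eq_add_of_lt hb
  rcases c with _ | c
  · rfl
  · simp [binRun, List.replicate_succ, lexLe] at h

lemma lexLe_binRun_binRun_zero_eq_false (a b c : ℕ) (hb : 0 < b) :
    lexLe (binRun a b) (binRun c 0) = false := by
  obtain ⟨b, rfl⟩ := Nat.exists_eq_add_of_lt hb
  induction a generalizing c with
  | zero => cases c <;> simp [binRun, List.replicate_succ, lexLe]
  | succ a ih =>
    cases c with
    | zero => rfl
    | succ c => simpa [binRun, List.replicate_succ, lexLe] using ih c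

lemma sum_occ01_eq_zero_of_lexLe {b : ℕ} (hb : 0 < b) {t : List (List ℕ)}
    (hruns : ∀ r ∈ t, IsBinRun r) (hle : ∀ r ∈ t, lexLe (binRun 0 b) r) :
    (t.map occ01).sum = 0 := by
  refine List.sum_eq_zero fun n hn => ?_
  obtain ⟨r, hr, rfl⟩ := List.mem_map.mp hn
  obtain ⟨c, d, -, rfl⟩ := hruns r hr
  simp [occ01_binRun, eq_zero_of_lexLe_binRun_zero hb (hle _ hr)]

theorem des_flatten_of_pairwise_lexLe : ∀ rs : List (List ℕ), (∀ r ∈ rs, IsBinRun r) →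
    rs.Pairwise (fun r s => lexLe r s) → des rs.flatten = (rs.map occ01).sum - 1
  | [], _, _ => rfl
  | [r], hruns, _ => by
    obtain ⟨a, b, -, rfl⟩ := hruns r (by simp)
    have hnil : des [] = 0 := rfl
    have h := des_binRun_append a b []
    simp only [List.append_nil, hnil] at h
    simp [h, occ01_binRun]
    split_ifs <;> rfl
  | r :: s :: t, hruns, hsorted => by
    obtain ⟨hr, hst⟩ := List.pairwise_cons.mp hsorted
    have ih := des_flatten_of_pairwise_lexLe (s :: t) (fun u hu => hruns u (.tail _ hu)) hst
    obtain ⟨a, b, -, rfl⟩ := hruns r (by simp)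
    obtain ⟨c, d, hcd, rfl⟩ := hruns s (by simp)
    have htruns : ∀ u ∈ t, IsBinRun u := fun u hu => hruns u (by simp [hu])
    rw [List.flatten_cons, des_binRun_append, ih, List.flatten_cons, head?_binRun_append hcd]
    simp only [List.map_cons, List.sum_cons, occ01_binRun]
    rcases Nat.eq_zero_or_pos b with rfl | hb
    · simp
    rcases Nat.eq_zero_or_pos a with rfl | ha
    · -- every run after a run of ones consists of ones
      have hc := eq_zero_of_lexLe_binRun_zero hb (hr _ List.mem_cons_self)
      have ht := sum_occ01_eq_zero_of_lexLe hb htruns fun u hu => hr u (by simp [hu])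
      simp [hc, ht]
    rcases Nat.eq_zero_or_pos c with rfl | hc
    · have ht := sum_occ01_eq_zero_of_lexLe (b := d) (by omega) htruns
        fun u hu => List.rel_of_pairwise_cons hst hu
      simp [ht, ha, hb]
    have hd : 0 < d := by
      by_contra! hd
      have h := hr _ List.mem_cons_self
      rw [Nat.le_zero.mp hd, lexLe_binRun_binRun_zero_eq_false a b c hb] at h
      exact Bool.false_ne_true h
    simp [ha, hb, hc, hd]

theorem des_runsort {l : List ℕ} (hl : ∀ x ∈ l, x ≤ 1) : des (runsort l) = occ01 l - 1 := by
  have hperm := List.mergeSort_perm (splitRuns l) lexLe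
  rw [runsort, des_flatten_of_pairwise_lexLe _
      (fun r hr => isBinRun_of_mem_splitRuns l hl r (hperm.mem_iff.mp hr))
      (List.pairwise_mergeSort lexLe_trans lexLe_total _),
    (hperm.map occ01).sum_eq, occ01_eq_sum_splitRuns]

lemma word_cons {n : ℕ} (x : Fin 2) (v : Fin n → Fin 2) :
    word (Fin.cons x v : Fin (n + 1) → Fin 2) = (x : ℕ) :: word v := by
  simp [word, List.ofFn_succ]

lemma word_le_one {n : ℕ} (w : Fin n → Fin 2) : ∀ x ∈ word w, x ≤ 1 := by
  simp only [word, List.mem_ofFn, forall_exists_index]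
  rintro _ i rfl
  exact Nat.le_of_lt_succ (w i).isLt

lemma card_filter_pi_fin_succ {α : Type*} [Fintype α] {n : ℕ}
    (p : (Fin (n + 1) → α) → Prop) [DecidablePred p] :
    #{w | p w} = ∑ a, #{v : Fin n → α | p (Fin.cons a v)} := by
  simp only [card_filter]
  rw [← Fintype.sum_prod_type']
  exact (Fintype.sum_equiv (Fin.consEquiv fun _ => α) _ _ fun _ => rfl).symm

lemma card_occ01_cons (n k : ℕ) (x : Fin 2) :
    #{w : Fin n → Fin 2 | occ01 ((x : ℕ) :: word w) = k} = (n + 1).choose (2 * k + x) := by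
  induction n generalizing k x with
  | zero =>
    have h (w : Fin 0 → Fin 2) : word w = [] := List.ofFn_zero
    fin_cases x <;> rcases k with _ | k <;> simp [h, occ01] <;>
      exact (Nat.choose_eq_zero_of_lt (by omega)).symm
  | succ n ih =>
    rw [card_filter_pi_fin_succ, Fin.sum_univ_two]
    have ih0 (k : ℕ) := ih k 0
    have ih1 (k : ℕ) := ih k 1
    simp only [Fin.isValue, Fin.val_zero, Fin.val_one, add_zero] at ih0 ih1
    simp only [word_cons, occ01_cons_cons]
    fin_cases x
    · rcases k with _ | k
      · simp [ih0]
      · simp [ih0, add_comm 1, ih1]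
        rw [show 2 * (k + 1) = 2 * k + 1 + 1 by ring, Nat.choose_succ_succ' (n + 1), add_comm]
    · simp [ih0, ih1, Nat.choose_succ_succ' (n + 1)]

/-- For `k ≥ 2`, a binary word of length `n` has exactly `k-1` descents after run-sorting
iff it has exactly `k` occurrences of `01`, and the number of such words is
`C(n,2k)+C(n,2k+1)`. -/
theorem stmt18 (n k : ℕ) (hk : 2 ≤ k) :
    (∀ w : Fin n → Fin 2, des (runsort (word w)) = k - 1 ↔ occ01 (word w) = k) ∧
    (Finset.univ.filter fun w : Fin n → Fin 2 =>
      occ01 (word w) = k).card = n.choose (2*k) + n.choose (2*k+1) := by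
  refine ⟨fun w => ?_, ?_⟩
  · have := des_runsort (word_le_one w)
    omega
  · have h := card_occ01_cons n k 1
    simp only [Fin.isValue, Fin.val_one, occ01_cons, one_ne_zero, false_and, if_false,
      zero_add] at h
    rw [h, Nat.choose_succ_succ']
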